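/- For every m with 1 ≤ m ≤ M, the stationary level vectors satisfy the linear relation π^m B^m = −π^{m−1} U^{m−1}. -/

import Mathlib

/-! Write `levelInflow Q π lev a s` for the flow `∑ π t Q t s` into the state `s` from the
states of level `a`. Stationarity at a level-`m` state, together with block tridiagonality, says
that the inflows from levels `m - 1`, `m` and `m + 1` sum to zero; the first two are the entries
of `π^{m-1} U^{m-1}` and `π^m W^m`. For the third, the balance of flows across the cut
`{levels ≤ m}` says that the total flow from level `m + 1` down into level `m` equals the total
flow `π^m U^m 1` from level `m` up, and by the DES property all of the former enters at stage `0`: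
this is exactly `π^m Ũ^m`. At the top level both vanish. -/

open Matrix Finset

section Generator

variable {S R : Type*} [Fintype S] [CommRing R] {Q : Matrix S S R} {π : S → R}

theorem sum_mul_filter_not_eq_sum_mul_filter (hrow : ∀ s, ∑ t, Q s t = 0)
    (hπ : vecMul π Q = 0) (p : S → Prop) [DecidablePred p] :
    ∑ t with p t, ∑ s with ¬p s, π t * Q t s = ∑ t with ¬p t, ∑ s with p s, π t * Q t s := by
  have hout (t : S) : ∑ s with ¬p s, Q t s = -∑ s with p s, Q t s := by
    rw [eq_neg_iff_add_eq_zero, add_comm, sum_filter_add_sum_filter_not, hrow]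
  have hin : ∑ t, ∑ s with p s, π t * Q t s = 0 := by
    rw [sum_comm]
    exact sum_eq_zero fun s _ => congrFun hπ s
  rw [← sum_filter_add_sum_filter_not univ p] at hin
  simp only [← mul_sum, hout, mul_neg, sum_neg_distrib] at hin ⊢
  linear_combination -hin

def levelInflow (Q : Matrix S S R) (π : S → R) (lev : S → ℕ) (a : ℕ) (s : S) : R :=
  ∑ t with lev t = a, π t * Q t s

variable {lev : S → ℕ}

theorem levelInflow_pred_add_self_add_succ
    (htri : ∀ t s, 1 < |(lev t : ℤ) - lev s| → Q t s = 0) (hπ : vecMul π Q = 0) (s : S)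
    (hs : 1 ≤ lev s) :
    levelInflow Q π lev (lev s - 1) s + levelInflow Q π lev (lev s) s
      + levelInflow Q π lev (lev s + 1) s = 0 := by
  have hsupp : ∀ t ∈ univ, π t * Q t s ≠ 0 →
      lev t ∈ ({lev s - 1, lev s, lev s + 1} : Finset ℕ) := by
    intro t _ h
    by_contra hfar
    simp only [mem_insert, mem_singleton] at hfar
    exact h (by rw [htri t s (by rw [lt_abs]; omega), mul_zero])
  have hcol : ∑ t, π t * Q t s = 0 := congrFun hπ s
  rw [← sum_filter_of_ne hsupp, ← sum_fiberwise_eq_sum_filter, sum_insert (by simp; omega),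
    sum_pair (by omega)] at hcol
  rw [← hcol, add_assoc]
  rfl

theorem sum_levelInflow_succ_eq
    (htri : ∀ t s, 1 < |(lev t : ℤ) - lev s| → Q t s = 0) (hrow : ∀ s, ∑ t, Q s t = 0)
    (hπ : vecMul π Q = 0) (m : ℕ) :
    ∑ s with lev s = m + 1, levelInflow Q π lev m s
      = ∑ s with lev s = m, levelInflow Q π lev (m + 1) s := by
  have hcut := sum_mul_filter_not_eq_sum_mul_filter hrow hπ (fun t => lev t ≤ m)
  have hout : ∑ t with lev t ≤ m, ∑ s with ¬lev s ≤ m, π t * Q t s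
      = ∑ t with lev t = m, ∑ s with lev s = m + 1, π t * Q t s := by
    rw [← sum_product', ← sum_product']
    refine (sum_subset (fun x => by simp; omega) fun x hx hx' => ?_).symm
    simp only [mem_product, mem_filter_univ] at hx hx'
    rw [htri _ _ (by rw [lt_abs]; omega), mul_zero]
  have hin : ∑ t with ¬lev t ≤ m, ∑ s with lev s ≤ m, π t * Q t s
      = ∑ t with lev t = m + 1, ∑ s with lev s = m, π t * Q t s := by
    rw [← sum_product', ← sum_product']
    refine (sum_subset (fun x => by simp; omega) fun x hx hx' => ?_).symm
    simp only [mem_product, mem_filter_univ] at hx hx'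
    rw [htri _ _ (by rw [lt_abs]; omega), mul_zero]
  simp only [levelInflow]
  rw [sum_comm, ← hout, hcut, hin, sum_comm]

end Generator

section Levels

variable {M : ℕ} {ι R : Type*} [Fintype ι] [CommRing R]

theorem sum_filter_fst_val_eq {β : Type*} [AddCommMonoid β] (f : Fin (M + 1) × ι → β) (a : ℕ)
    (ha : a < M + 1) :
    ∑ t with (t.1 : ℕ) = a, f t = ∑ i, f (⟨a, ha⟩, i) := by
  rw [sum_filter, Fintype.sum_prod_type, sum_eq_single ⟨a, ha⟩ (fun b _ hb => ?_) (by simp)]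
  · simp
  · exact sum_eq_zero fun i _ => if_neg fun h => hb (Fin.ext h)

theorem levelInflow_fst_eq_zero_of_lt (Q : Matrix (Fin (M + 1) × ι) (Fin (M + 1) × ι) R)
    (π : Fin (M + 1) × ι → R) (a : ℕ) (ha : M < a) (s : Fin (M + 1) × ι) :
    levelInflow Q π (fun t => (t.1 : ℕ)) a s = 0 :=
  sum_eq_zero fun t ht => absurd ((mem_filter_univ t).1 ht) (by simp only; omega)

variable {Q : Matrix (Fin (M + 1) × ι) (Fin (M + 1) × ι) R} {π : Fin (M + 1) × ι → R}

theorem sum_mul_sum_up_eq_levelInflow_entrance (hrow : ∀ s, ∑ t, Q s t = 0)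
    (hπ : vecMul π Q = 0)
    (htri : ∀ t s : Fin (M + 1) × ι, 1 < |((t.1 : ℕ) : ℤ) - (s.1 : ℕ)| → Q t s = 0)
    (e : ι) (m : ℕ) (hm : m < M)
    (hDES : ∀ i j, j ≠ e →
      Q (⟨m + 1, Nat.succ_lt_succ hm⟩, i) (⟨m, Nat.lt_succ_of_lt hm⟩, j) = 0) :
    ∑ i, π (⟨m, Nat.lt_succ_of_lt hm⟩, i) *
        ∑ k, Q (⟨m, Nat.lt_succ_of_lt hm⟩, i) (⟨m + 1, Nat.succ_lt_succ hm⟩, k)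
      = levelInflow Q π (fun t => (t.1 : ℕ)) (m + 1) (⟨m, Nat.lt_succ_of_lt hm⟩, e) := by
  calc _ = ∑ s with (s.1 : ℕ) = m + 1, levelInflow Q π (fun t => (t.1 : ℕ)) m s := by
        simp only [levelInflow, sum_filter_fst_val_eq _ _ (by omega : m < M + 1),
          sum_filter_fst_val_eq _ _ (by omega : m + 1 < M + 1), mul_sum]
        exact sum_comm
    _ = ∑ s with (s.1 : ℕ) = m, levelInflow Q π (fun t => (t.1 : ℕ)) (m + 1) s :=
        sum_levelInflow_succ_eq htri hrow hπ m
    _ = _ := by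
        rw [sum_filter_fst_val_eq _ _ (by omega : m < M + 1), sum_eq_single e _ (by simp)]
        intro j _ hj
        simp only [levelInflow, sum_filter_fst_val_eq _ _ (by omega : m + 1 < M + 1), hDES _ j hj,
          mul_zero, sum_const_zero]

theorem vecMul_lumpedUp_apply_eq_levelInflow_succ [DecidableEq ι]
    (hrow : ∀ s, ∑ t, Q s t = 0) (hπ : vecMul π Q = 0)
    (htri : ∀ t s : Fin (M + 1) × ι, 1 < |((t.1 : ℕ) : ℤ) - (s.1 : ℕ)| → Q t s = 0) (e : ι)
    (hDES : ∀ (m : ℕ) (hm : m < M) (i j : ι), j ≠ e →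
      Q (⟨m + 1, Nat.succ_lt_succ hm⟩, i) (⟨m, Nat.lt_succ_of_lt hm⟩, j) = 0)
    {U Ut : ℕ → Matrix ι ι R}
    (hU : ∀ (m : ℕ) (hm : m < M) (i j : ι),
      U m i j = Q (⟨m, Nat.lt_succ_of_lt hm⟩, i) (⟨m + 1, Nat.succ_lt_succ hm⟩, j))
    (hUt : ∀ m, m < M → ∀ i j, Ut m i j = if j = e then ∑ k, U m i k else 0)
    (hUtM : Ut M = 0) (m : ℕ) (hm : m ≤ M) (j : ι) :
    vecMul (fun i => π (⟨m, Nat.lt_succ_of_le hm⟩, i)) (Ut m) j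
      = levelInflow Q π (fun t => (t.1 : ℕ)) (m + 1) (⟨m, Nat.lt_succ_of_le hm⟩, j) := by
  rcases hm.lt_or_eq with hm | rfl
  · simp only [vecMul, dotProduct, hUt m hm]
    split_ifs with hj
    · subst hj
      rw [← sum_mul_sum_up_eq_levelInflow_entrance hrow hπ htri j m hm (hDES m hm)]
      simp only [hU m hm]
    · simp only [mul_zero, sum_const_zero, levelInflow,
        sum_filter_fst_val_eq _ _ (by omega : m + 1 < M + 1), hDES m hm _ j hj]
  · rw [hUtM, vecMul_zero, levelInflow_fst_eq_zero_of_lt _ _ _ (by omega)]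
    rfl

end Levels

theorem stmt_2
    (M l : ℕ)
    (Q : Matrix (Fin (M+1) × Fin (l+1)) (Fin (M+1) × Fin (l+1)) ℝ)
    (htri : ∀ (m n : Fin (M+1)) (i j : Fin (l+1)),
      1 < |(m.val : ℤ) - (n.val : ℤ)| → Q (m, i) (n, j) = 0)
    (hrow : ∀ s, ∑ t, Q s t = 0)
    (W U D : ℕ → Matrix (Fin (l+1)) (Fin (l+1)) ℝ)
    (hW : ∀ (m : ℕ) (hm : m ≤ M) (i j : Fin (l+1)),
      W m i j = Q (⟨m, by omega⟩, i) (⟨m, by omega⟩, j))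
    (hU : ∀ (m : ℕ) (hm : m < M) (i j : Fin (l+1)),
      U m i j = Q (⟨m, by omega⟩, i) (⟨m+1, by omega⟩, j))
    (hD : ∀ (m : ℕ) (hm1 : 1 ≤ m) (hm2 : m ≤ M) (i j : Fin (l+1)),
      D m i j = Q (⟨m, by omega⟩, i) (⟨m-1, by omega⟩, j))
    (hDES : ∀ (m : ℕ), 1 ≤ m → m ≤ M → ∀ (i j : Fin (l+1)), j ≠ 0 → D m i j = 0)
    (Ut : ℕ → Matrix (Fin (l+1)) (Fin (l+1)) ℝ)
    (hUt : ∀ (m : ℕ), m < M → ∀ (i j : Fin (l+1)),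
      Ut m i j = if j = 0 then ∑ k, U m i k else 0)
    (hUtM : Ut M = 0)
    (B : ℕ → Matrix (Fin (l+1)) (Fin (l+1)) ℝ)
    (hB : ∀ (m : ℕ), m ≤ M → B m = W m + Ut m)
    (π : Fin (M+1) × Fin (l+1) → ℝ)
    (hπ : Matrix.vecMul π Q = 0) :
    ∀ (m : ℕ) (hm1 : 1 ≤ m) (hm2 : m ≤ M),
      Matrix.vecMul (fun i => π (⟨m, by omega⟩, i)) (B m)
        = -(Matrix.vecMul (fun i => π (⟨m-1, by omega⟩, i)) (U (m-1))) := by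
  intro m hm1 hm2
  funext j
  have htri' : ∀ t s : Fin (M + 1) × Fin (l + 1),
      1 < |((t.1 : ℕ) : ℤ) - (s.1 : ℕ)| → Q t s = 0 := fun t s => htri t.1 s.1 t.2 s.2
  have hDES' (n : ℕ) (hn : n < M) (i k : Fin (l + 1)) (hk : k ≠ 0) :
      Q (⟨n + 1, by omega⟩, i) (⟨n, by omega⟩, k) = 0 :=
    (hD (n + 1) (by omega) (by omega) i k).symm.trans (hDES (n + 1) (by omega) hn i k hk)
  have hWin : vecMul (fun i => π (⟨m, by omega⟩, i)) (W m) j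
      = levelInflow Q π (fun t => (t.1 : ℕ)) m (⟨m, by omega⟩, j) := by
    simp only [levelInflow, sum_filter_fst_val_eq _ _ (by omega : m < M + 1), vecMul, dotProduct,
      hW m hm2]
  have hUin : vecMul (fun i => π (⟨m - 1, by omega⟩, i)) (U (m - 1)) j
      = levelInflow Q π (fun t => (t.1 : ℕ)) (m - 1) (⟨m, by omega⟩, j) := by
    simp only [levelInflow, sum_filter_fst_val_eq _ _ (by omega : m - 1 < M + 1), vecMul,
      dotProduct, hU (m - 1) (by omega), Nat.sub_add_cancel hm1]
  have hbal := levelInflow_pred_add_self_add_succ htri' hπ (⟨m, by omega⟩, j) hm1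
  rw [hB m hm2, vecMul_add, Pi.add_apply, Pi.neg_apply, hWin, hUin,
    vecMul_lumpedUp_apply_eq_levelInflow_succ hrow hπ htri' 0 hDES' hU hUt hUtM m hm2]
  linear_combination hbal
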